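/- arXiv:2012.00216 — 4 statements merged into one kernel-verified Lean document; each statement's English description precedes it below -/
import Mathlib

section
/- Monotonicity coupling for probabilistic zero forcing: for any graph G, sets S₁ ⊆ S₂ ⊆ V(G), target set T ⊆ V(G), and ℓ ∈ ℕ, the probability that starting from blue set S₁ all of T is blue after ℓ rounds is at most the probability that starting from blue set S₂ all of T is blue after ℓ rounds. -/
open Finset

/-- The probability that a white vertex `v` is forced (turned blue) in one round of
probabilistic zero forcing, given the current blue set `Z`:
each blue neighbour `u` of `v` independently forces `v` with probability `|N[u] ∩ Z| / deg u`. -/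
noncomputable def forceProb {V : Type} [Fintype V] [DecidableEq V]
    (G : SimpleGraph V) [DecidableRel G.Adj] (Z : Finset V) (v : V) : ℝ :=
  1 - ∏ u ∈ Z.filter (fun u => G.Adj u v),
        (1 - (((insert u (G.neighborFinset u)) ∩ Z).card : ℝ) / (G.degree u : ℝ))

/-- Transition probability of one round of probabilistic zero forcing:
from blue set `Z` to blue set `Z'`.  Distinct white vertices are forced independently. -/
noncomputable def stepProb {V : Type} [Fintype V] [DecidableEq V]
    (G : SimpleGraph V) [DecidableRel G.Adj] (Z Z' : Finset V) : ℝ :=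
  if Z ⊆ Z' then
    ∏ v ∈ Zᶜ, (if v ∈ Z' then forceProb G Z v else 1 - forceProb G Z v)
  else 0

/-- `pzfProb G t Z Z'` is the probability that, starting from blue set `Z`,
after `t` rounds of probabilistic zero forcing the blue set is exactly `Z'`. -/
noncomputable def pzfProb {V : Type} [Fintype V] [DecidableEq V]
    (G : SimpleGraph V) [DecidableRel G.Adj] : ℕ → Finset V → Finset V → ℝ
  | 0, Z, Z' => if Z' = Z then 1 else 0
  | (t+1), Z, Z' => ∑ W : Finset V, stepProb G Z W * pzfProb G t W Z'

section Aux

variable {V : Type} [Fintype V] [DecidableEq V] (G : SimpleGraph V) [DecidableRel G.Adj]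

/-- Each factor in the `forceProb` product lies in `[0,1]` when `v` is white. -/
lemma pzf_factor_bounds {Z : Finset V} {v u : V} (hv : v ∉ Z) (hu : G.Adj u v) :
    0 ≤ 1 - (((insert u (G.neighborFinset u)) ∩ Z).card : ℝ) / (G.degree u : ℝ) ∧
    1 - (((insert u (G.neighborFinset u)) ∩ Z).card : ℝ) / (G.degree u : ℝ) ≤ 1 := by
  have hdeg : 0 < G.degree u := by
    rw [G.degree_pos_iff_exists_adj]; exact ⟨v, hu⟩
  have hvmem : v ∈ insert u (G.neighborFinset u) := by
    simp [SimpleGraph.mem_neighborFinset, hu]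
  constructor
  · have hsub : (insert u (G.neighborFinset u)) ∩ Z ⊆ (insert u (G.neighborFinset u)).erase v := by
      intro x hx
      rw [Finset.mem_erase]
      refine ⟨?_, (Finset.mem_inter.mp hx).1⟩
      rintro rfl; exact hv (Finset.mem_inter.mp hx).2
    have hcard : ((insert u (G.neighborFinset u)) ∩ Z).card ≤ G.degree u := by
      calc ((insert u (G.neighborFinset u)) ∩ Z).card
          ≤ ((insert u (G.neighborFinset u)).erase v).card := Finset.card_le_card hsub
        _ = (insert u (G.neighborFinset u)).card - 1 := Finset.card_erase_of_mem hvmem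
        _ = G.degree u := by
            rw [Finset.card_insert_of_notMem (G.notMem_neighborFinset_self u),
              G.card_neighborFinset_eq_degree]
            omega
    have h1 : (((insert u (G.neighborFinset u)) ∩ Z).card : ℝ) / (G.degree u : ℝ) ≤ 1 := by
      rw [div_le_one (by exact_mod_cast hdeg)]
      exact_mod_cast hcard
    linarith
  · have h0 : 0 ≤ (((insert u (G.neighborFinset u)) ∩ Z).card : ℝ) / (G.degree u : ℝ) :=
      div_nonneg (by positivity) (by positivity)
    linarith

lemma forceProb_nonneg {Z : Finset V} {v : V} (hv : v ∉ Z) : 0 ≤ forceProb G Z v := by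
  unfold forceProb
  have : ∏ u ∈ Z.filter (fun u => G.Adj u v),
      (1 - (((insert u (G.neighborFinset u)) ∩ Z).card : ℝ) / (G.degree u : ℝ)) ≤ 1 := by
    apply Finset.prod_le_one
    · intro u hu
      exact (pzf_factor_bounds G hv (Finset.mem_filter.mp hu).2).1
    · intro u hu
      exact (pzf_factor_bounds G hv (Finset.mem_filter.mp hu).2).2
  linarith

lemma forceProb_le_one {Z : Finset V} {v : V} (hv : v ∉ Z) : forceProb G Z v ≤ 1 := by
  unfold forceProb
  have : 0 ≤ ∏ u ∈ Z.filter (fun u => G.Adj u v),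
      (1 - (((insert u (G.neighborFinset u)) ∩ Z).card : ℝ) / (G.degree u : ℝ)) := by
    apply Finset.prod_nonneg
    intro u hu
    exact (pzf_factor_bounds G hv (Finset.mem_filter.mp hu).2).1
  linarith

lemma forceProb_mono {Z₁ Z₂ : Finset V} {v : V} (hZ : Z₁ ⊆ Z₂) (hv : v ∉ Z₂) :
    forceProb G Z₁ v ≤ forceProb G Z₂ v := by
  have hv1 : v ∉ Z₁ := fun h => hv (hZ h)
  unfold forceProb
  have hfs : Z₁.filter (fun u => G.Adj u v) ⊆ Z₂.filter (fun u => G.Adj u v) :=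
    Finset.filter_subset_filter _ hZ
  set a₂ : V → ℝ := fun u =>
    1 - (((insert u (G.neighborFinset u)) ∩ Z₂).card : ℝ) / (G.degree u : ℝ) with ha₂
  set a₁ : V → ℝ := fun u =>
    1 - (((insert u (G.neighborFinset u)) ∩ Z₁).card : ℝ) / (G.degree u : ℝ) with ha₁
  have key : ∏ u ∈ Z₂.filter (fun u => G.Adj u v), a₂ u ≤
      ∏ u ∈ Z₁.filter (fun u => G.Adj u v), a₁ u := by
    have h2bounds : ∀ u ∈ Z₂.filter (fun u => G.Adj u v), 0 ≤ a₂ u ∧ a₂ u ≤ 1 := by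
      intro u hu
      exact pzf_factor_bounds G hv (Finset.mem_filter.mp hu).2
    calc ∏ u ∈ Z₂.filter (fun u => G.Adj u v), a₂ u
        = (∏ u ∈ Z₂.filter (fun u => G.Adj u v) \ Z₁.filter (fun u => G.Adj u v), a₂ u) *
          ∏ u ∈ Z₁.filter (fun u => G.Adj u v), a₂ u := (Finset.prod_sdiff hfs).symm
      _ ≤ 1 * ∏ u ∈ Z₁.filter (fun u => G.Adj u v), a₂ u := by
          apply mul_le_mul_of_nonneg_right
          · apply Finset.prod_le_one
            · intro u hu
              exact (h2bounds u (Finset.mem_sdiff.mp hu).1).1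
            · intro u hu
              exact (h2bounds u (Finset.mem_sdiff.mp hu).1).2
          · apply Finset.prod_nonneg
            intro u hu
            exact (h2bounds u (hfs hu)).1
      _ = ∏ u ∈ Z₁.filter (fun u => G.Adj u v), a₂ u := one_mul _
      _ ≤ ∏ u ∈ Z₁.filter (fun u => G.Adj u v), a₁ u := by
          apply Finset.prod_le_prod
          · intro u hu
            exact (h2bounds u (hfs hu)).1
          · intro u hu
            have hle : ((insert u (G.neighborFinset u)) ∩ Z₁).card ≤
                ((insert u (G.neighborFinset u)) ∩ Z₂).card :=
              Finset.card_le_card (Finset.inter_subset_inter_left hZ)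
            have hadj := (Finset.mem_filter.mp hu).2
            have hdegR : (0:ℝ) < (G.degree u : ℝ) := by
              exact_mod_cast (G.degree_pos_iff_exists_adj u).mpr ⟨v, hadj⟩
            have : (((insert u (G.neighborFinset u)) ∩ Z₁).card : ℝ) / (G.degree u : ℝ) ≤
                (((insert u (G.neighborFinset u)) ∩ Z₂).card : ℝ) / (G.degree u : ℝ) :=
              (div_le_div_iff_of_pos_right hdegR).mpr (by exact_mod_cast hle)
            simp only [ha₁, ha₂]
            linarith
  linarith [key]

end Aux

section Bern

variable {V : Type} [DecidableEq V]

/-- Product-Bernoulli weight of outcome `B` among coordinates `A`. -/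
noncomputable def bwt (p : V → ℝ) (A B : Finset V) : ℝ :=
  (∏ v ∈ B, p v) * ∏ v ∈ A \ B, (1 - p v)

lemma bwt_insert_notMem (p : V → ℝ) {a : V} {A B : Finset V} (ha : a ∉ A) (hB : B ⊆ A) :
    bwt p (insert a A) B = (1 - p a) * bwt p A B := by
  have haB : a ∉ B := fun h => ha (hB h)
  have : insert a A \ B = insert a (A \ B) := by
    rw [Finset.insert_sdiff_of_notMem _ haB]
  rw [bwt, bwt, this, Finset.prod_insert (by simp [ha])]
  ring

lemma bwt_insert_mem (p : V → ℝ) {a : V} {A B : Finset V} (ha : a ∉ A) (hB : B ⊆ A) :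
    bwt p (insert a A) (insert a B) = p a * bwt p A B := by
  have haB : a ∉ B := fun h => ha (hB h)
  have hsd : insert a A \ insert a B = A \ B := by
    ext x
    simp only [Finset.mem_sdiff, Finset.mem_insert]
    constructor
    · rintro ⟨hx1 | hx1, hx2⟩
      · exact absurd (Or.inl hx1) hx2
      · exact ⟨hx1, fun h => hx2 (Or.inr h)⟩
    · rintro ⟨hx1, hx2⟩
      exact ⟨Or.inr hx1, fun h => h.elim (fun he => ha (he ▸ hx1)) hx2⟩
  rw [bwt, bwt, hsd, Finset.prod_insert haB]
  ring

/-- Stochastic-domination inequality for product Bernoulli measures. -/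
lemma bern_le (A : Finset V) :
    ∀ (p q : V → ℝ) (f g : Finset V → ℝ),
    (∀ v ∈ A, 0 ≤ p v ∧ p v ≤ q v ∧ q v ≤ 1) →
    (∀ B C : Finset V, B ⊆ C → f B ≤ g C) →
    (∀ B C : Finset V, B ⊆ C → g B ≤ g C) →
    ∑ B ∈ A.powerset, bwt p A B * f B ≤ ∑ B ∈ A.powerset, bwt q A B * g B := by
  induction A using Finset.induction with
  | empty =>
    intro p q f g _ hfg _
    simpa [bwt] using hfg ∅ ∅ subset_rfl
  | @insert a A ha ih =>
    intro p q f g hpq hfg hg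
    rw [Finset.sum_powerset_insert ha, Finset.sum_powerset_insert ha,
      ← Finset.sum_add_distrib, ← Finset.sum_add_distrib]
    have hL : ∀ B ∈ A.powerset,
        bwt p (insert a A) B * f B + bwt p (insert a A) (insert a B) * f (insert a B) =
        bwt p A B * ((1 - p a) * f B + p a * f (insert a B)) := by
      intro B hB
      rw [bwt_insert_notMem p ha (Finset.mem_powerset.mp hB),
        bwt_insert_mem p ha (Finset.mem_powerset.mp hB)]
      ring
    have hR : ∀ B ∈ A.powerset,
        bwt q (insert a A) B * g B + bwt q (insert a A) (insert a B) * g (insert a B) =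
        bwt q A B * ((1 - q a) * g B + q a * g (insert a B)) := by
      intro B hB
      rw [bwt_insert_notMem q ha (Finset.mem_powerset.mp hB),
        bwt_insert_mem q ha (Finset.mem_powerset.mp hB)]
      ring
    rw [Finset.sum_congr rfl hL, Finset.sum_congr rfl hR]
    apply ih
    · intro v hv
      exact hpq v (Finset.mem_insert_of_mem hv)
    · intro B C hBC
      obtain ⟨hp0, hpq', hq1⟩ := hpq a (Finset.mem_insert_self a A)
      have h1 : f B ≤ g C := hfg B C hBC
      have h2 : f (insert a B) ≤ g (insert a C) :=
        hfg _ _ (Finset.insert_subset_insert a hBC)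
      have h3 : g C ≤ g (insert a C) := hg C (insert a C) (Finset.subset_insert a C)
      nlinarith [h1, h2, h3, hp0, hpq', hq1]
    · intro B C hBC
      obtain ⟨hp0, hpq', hq1⟩ := hpq a (Finset.mem_insert_self a A)
      have h1 : g B ≤ g C := hg B C hBC
      have h2 : g (insert a B) ≤ g (insert a C) :=
        hg _ _ (Finset.insert_subset_insert a hBC)
      nlinarith [h1, h2, hp0, hpq', hq1]

/-- Coordinates with success probability `1` can be absorbed into the base set. -/
lemma bern_pad (q : V → ℝ) (D : Finset V) :
    ∀ (A : Finset V), Disjoint D A → (∀ v ∈ D, q v = 1) → ∀ (h : Finset V → ℝ),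
    ∑ B ∈ (D ∪ A).powerset, bwt q (D ∪ A) B * h B =
    ∑ B ∈ A.powerset, bwt q A B * h (D ∪ B) := by
  induction D using Finset.induction with
  | empty =>
    intro A _ _ h
    simp
  | @insert a D ha ih =>
    intro A hdisj hone h
    have haA : a ∉ A := by
      have := Finset.disjoint_left.mp hdisj (Finset.mem_insert_self a D)
      exact this
    have haDA : a ∉ D ∪ A := by simp [ha, haA]
    have hqa : q a = 1 := hone a (Finset.mem_insert_self a D)
    have hDA : insert a D ∪ A = insert a (D ∪ A) := by
      rw [Finset.insert_union]
    rw [hDA, Finset.sum_powerset_insert haDA]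
    have hz : ∀ B ∈ (D ∪ A).powerset, bwt q (insert a (D ∪ A)) B * h B = 0 := by
      intro B hB
      rw [bwt_insert_notMem q haDA (Finset.mem_powerset.mp hB), hqa]
      ring
    have ho : ∀ B ∈ (D ∪ A).powerset,
        bwt q (insert a (D ∪ A)) (insert a B) * h (insert a B) =
        bwt q (D ∪ A) B * h (insert a B) := by
      intro B hB
      rw [bwt_insert_mem q haDA (Finset.mem_powerset.mp hB), hqa, one_mul]
    rw [Finset.sum_congr rfl hz, Finset.sum_congr rfl ho, Finset.sum_const_zero, zero_add]
    have hdisj' : Disjoint D A :=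
      Finset.disjoint_left.mpr fun {x} hx hxA =>
        Finset.disjoint_left.mp hdisj (Finset.mem_insert_of_mem hx) hxA
    have hone' : ∀ v ∈ D, q v = 1 := fun v hv => hone v (Finset.mem_insert_of_mem hv)
    rw [ih A hdisj' hone' (fun B => h (insert a B))]
    apply Finset.sum_congr rfl
    intro B _
    congr 1
    rw [Finset.insert_union, ← Finset.insert_union]

end Bern

section StepSum

variable {V : Type} [Fintype V] [DecidableEq V] (G : SimpleGraph V) [DecidableRel G.Adj]

/-- The one-step expectation, rewritten as a sum over subsets of white vertices. -/
lemma step_sum (Z : Finset V) (h : Finset V → ℝ) :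
    ∑ W : Finset V, stepProb G Z W * h W =
    ∑ B ∈ Zᶜ.powerset, bwt (forceProb G Z) Zᶜ B * h (Z ∪ B) := by
  have h1 : ∀ W : Finset V, stepProb G Z W * h W =
      if Z ⊆ W then
        (∏ v ∈ Zᶜ, (if v ∈ W then forceProb G Z v else 1 - forceProb G Z v)) * h W
      else 0 := by
    intro W
    rw [stepProb]
    split_ifs <;> simp
  rw [Finset.sum_congr rfl (fun W _ => h1 W), ← Finset.sum_filter]
  apply Finset.sum_nbij' (i := fun W => W \ Z) (j := fun B => Z ∪ B)
  · intro W hW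
    rw [Finset.mem_powerset]
    intro x hx
    rw [Finset.mem_compl]
    exact (Finset.mem_sdiff.mp hx).2
  · intro B hB
    simp
  · intro W hW
    have hZW : Z ⊆ W := by simpa using hW
    exact Finset.union_sdiff_of_subset hZW
  · intro B hB
    have hBZ : Disjoint Z B := by
      rw [Finset.disjoint_left]
      intro x hxZ hxB
      have := Finset.mem_powerset.mp hB hxB
      rw [Finset.mem_compl] at this
      exact this hxZ
    exact Finset.union_sdiff_cancel_left hBZ
  · intro W hW
    have hZW : Z ⊆ W := by simpa using hW
    have hBsub : W \ Z ⊆ Zᶜ := by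
      intro x hx
      rw [Finset.mem_compl]
      exact (Finset.mem_sdiff.mp hx).2
    have hWu : Z ∪ W \ Z = W := Finset.union_sdiff_of_subset hZW
    rw [hWu]
    congr 1
    rw [bwt, ← Finset.prod_sdiff hBsub, mul_comm]
    congr 1
    · apply Finset.prod_congr rfl
      intro v hv
      rw [if_pos (Finset.mem_sdiff.mp hv).1]
    · apply Finset.prod_congr rfl
      intro v hv
      have h2 := Finset.mem_sdiff.mp hv
      have hvZ : v ∉ Z := Finset.mem_compl.mp h2.1
      have hvW : v ∉ W := fun hvW => h2.2 (Finset.mem_sdiff.mpr ⟨hvW, hvZ⟩)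
      rw [if_neg hvW]

/-- Key monotonicity: the probability that `T` is fully blue after `ℓ` rounds is
monotone in the initial blue set. -/
lemma pzf_blueprob_mono (T : Finset V) :
    ∀ (ℓ : ℕ) (Z₁ Z₂ : Finset V), Z₁ ⊆ Z₂ →
    ∑ Z ∈ Finset.univ.filter (fun Z : Finset V => T ⊆ Z), pzfProb G ℓ Z₁ Z ≤
    ∑ Z ∈ Finset.univ.filter (fun Z : Finset V => T ⊆ Z), pzfProb G ℓ Z₂ Z := by
  intro ℓ
  induction ℓ with
  | zero =>
    intro Z₁ Z₂ h12
    simp only [pzfProb]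
    rw [Finset.sum_ite_eq' _ Z₁ (fun _ => (1:ℝ)), Finset.sum_ite_eq' _ Z₂ (fun _ => (1:ℝ))]
    simp only [Finset.mem_filter, Finset.mem_univ, true_and]
    split_ifs with h1 h2 h2
    · exact le_refl 1
    · exact absurd (h1.trans h12) h2
    · norm_num
    · exact le_refl 0
  | succ t ih =>
    intro Z₁ Z₂ h12
    set filt := Finset.univ.filter (fun Z : Finset V => T ⊆ Z) with hfilt
    have hrec : ∀ Z0 : Finset V, ∑ Z' ∈ filt, pzfProb G (t+1) Z0 Z' =
        ∑ W : Finset V, stepProb G Z0 W * ∑ Z' ∈ filt, pzfProb G t W Z' := by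
      intro Z0
      simp only [pzfProb]
      rw [Finset.sum_comm]
      exact Finset.sum_congr rfl (fun W _ => (Finset.mul_sum _ _ _).symm)
    rw [hrec Z₁, hrec Z₂]
    set F : Finset V → ℝ := fun W => ∑ Z' ∈ filt, pzfProb G t W Z' with hF
    rw [step_sum G Z₁ F, step_sum G Z₂ F]
    set q' : V → ℝ := fun v => if v ∈ Z₂ then 1 else forceProb G Z₂ v with hq'
    have hD : (Z₂ \ Z₁) ∪ Z₂ᶜ = Z₁ᶜ := by
      ext x
      simp only [Finset.mem_union, Finset.mem_sdiff, Finset.mem_compl]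
      constructor
      · rintro (⟨_, hx⟩ | hx)
        · exact hx
        · exact fun h => hx (h12 h)
      · intro hx
        by_cases hx2 : x ∈ Z₂
        · exact Or.inl ⟨hx2, hx⟩
        · exact Or.inr hx2
    have hdisj : Disjoint (Z₂ \ Z₁) Z₂ᶜ := by
      rw [Finset.disjoint_left]
      intro x hx hxc
      exact (Finset.mem_compl.mp hxc) (Finset.mem_sdiff.mp hx).1
    have hone : ∀ v ∈ Z₂ \ Z₁, q' v = 1 := by
      intro v hv
      simp only [hq']
      rw [if_pos (Finset.mem_sdiff.mp hv).1]
    have hRHS : ∑ B ∈ Z₂ᶜ.powerset, bwt (forceProb G Z₂) Z₂ᶜ B * F (Z₂ ∪ B) =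
        ∑ B ∈ Z₁ᶜ.powerset, bwt q' Z₁ᶜ B * F (Z₂ ∪ B) := by
      have step1 : ∑ B ∈ Z₂ᶜ.powerset, bwt (forceProb G Z₂) Z₂ᶜ B * F (Z₂ ∪ B) =
          ∑ B ∈ Z₂ᶜ.powerset, bwt q' Z₂ᶜ B * F (Z₂ ∪ B) := by
        apply Finset.sum_congr rfl
        intro B hB
        have hBsub := Finset.mem_powerset.mp hB
        congr 1
        rw [bwt, bwt]
        congr 1
        · apply Finset.prod_congr rfl
          intro v hv
          have : v ∉ Z₂ := Finset.mem_compl.mp (hBsub hv)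
          simp only [hq']
          rw [if_neg this]
        · apply Finset.prod_congr rfl
          intro v hv
          have : v ∉ Z₂ := Finset.mem_compl.mp (Finset.mem_sdiff.mp hv).1
          simp only [hq']
          rw [if_neg this]
      have step2 := bern_pad q' (Z₂ \ Z₁) Z₂ᶜ hdisj hone (fun B => F (Z₂ ∪ B))
      rw [hD] at step2
      have step3 : ∀ B ∈ Z₂ᶜ.powerset,
          bwt q' Z₂ᶜ B * F (Z₂ ∪ (Z₂ \ Z₁ ∪ B)) = bwt q' Z₂ᶜ B * F (Z₂ ∪ B) := by
        intro B _
        congr 2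
        rw [← Finset.union_assoc]
        congr 1
        rw [Finset.union_eq_left]
        exact Finset.sdiff_subset
      rw [Finset.sum_congr rfl step3] at step2
      rw [step1, ← step2]
    rw [hRHS]
    apply bern_le Z₁ᶜ (forceProb G Z₁) q' (fun B => F (Z₁ ∪ B)) (fun B => F (Z₂ ∪ B))
    · intro v hv
      have hv1 : v ∉ Z₁ := Finset.mem_compl.mp hv
      refine ⟨forceProb_nonneg G hv1, ?_, ?_⟩
      · by_cases hv2 : v ∈ Z₂
        · simp only [hq']
          rw [if_pos hv2]
          exact forceProb_le_one G hv1
        · simp only [hq']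
          rw [if_neg hv2]
          exact forceProb_mono G h12 hv2
      · by_cases hv2 : v ∈ Z₂
        · simp only [hq']
          rw [if_pos hv2]
        · simp only [hq']
          rw [if_neg hv2]
          exact forceProb_le_one G hv2
    · intro B C hBC
      exact ih (Z₁ ∪ B) (Z₂ ∪ C) (Finset.union_subset_union h12 hBC)
    · intro B C hBC
      exact ih (Z₂ ∪ B) (Z₂ ∪ C) (Finset.union_subset_union subset_rfl hBC)

end StepSum

/-- Monotonicity coupling for probabilistic zero forcing: for `S₁ ⊆ S₂`, the probability
that all of `T` is blue after `ℓ` rounds starting from `S₁` is at most the corresponding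
probability starting from `S₂`. -/
theorem stmt3 {V : Type} [Fintype V] [DecidableEq V]
    (G : SimpleGraph V) [DecidableRel G.Adj]
    (S₁ S₂ T : Finset V) (hS : S₁ ⊆ S₂) (ℓ : ℕ) :
    ∑ Z ∈ Finset.univ.filter (fun Z : Finset V => T ⊆ Z), pzfProb G ℓ S₁ Z ≤
      ∑ Z ∈ Finset.univ.filter (fun Z : Finset V => T ⊆ Z), pzfProb G ℓ S₂ Z :=
  pzf_blueprob_mono G T ℓ S₁ S₂ hS
end

section
/- Let k ≥ 1 and suppose at time t₀ all vertices of a k-principal-square of the grid are blue under probabilistic zero forcing. Then with probability 1 - o(1/n), at time t₀ + 6 ln n all vertices of the (k+1)-principal-square are blue. -/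
open Finset

/-- The `m × n` grid graph: the Cartesian product of a path on `m` vertices
and a path on `n` vertices. -/
def gridGraph (m n : ℕ) : SimpleGraph (Fin m × Fin n) :=
  SimpleGraph.fromRel (fun p q =>
    (p.1 = q.1 ∧ p.2.val + 1 = q.2.val) ∨ (p.2 = q.2 ∧ p.1.val + 1 = q.1.val))

instance gridGraph.adjDecidable (m n : ℕ) : DecidableRel (gridGraph m n).Adj := fun p q =>
  decidable_of_iff (p ≠ q ∧
      (((p.1 = q.1 ∧ p.2.val + 1 = q.2.val) ∨ (p.2 = q.2 ∧ p.1.val + 1 = q.1.val)) ∨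
       ((q.1 = p.1 ∧ q.2.val + 1 = p.2.val) ∨ (q.2 = p.2 ∧ q.1.val + 1 = p.1.val)))) Iff.rfl

/-- The `k`-principal-square of the `(2M+1) × (2M+1)` grid: the `(2k+1) × (2k+1)` sub-grid
centred on the origin `(M, M)`. -/
def psq (n M k : ℕ) : Finset (Fin n × Fin n) :=
  Finset.univ.filter (fun p =>
    (M ≤ p.1.val + k ∧ p.1.val ≤ M + k) ∧ (M ≤ p.2.val + k ∧ p.2.val ≤ M + k))

/-!
Every vertex `v` of the `(k+1)`-square is reached through a relay `u` (`v` itself or a neighbour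
of `v`) that has a neighbour `w` in the `k`-square. Since `k ≥ 1`, at least three of the at most
four closed neighbours of `w` are blue, so `u` stays white for a round with probability at most
`1/4 ≤ 1/2`; once `u` is blue, its closed neighbourhood contains the blue vertices `u` and `w`,
so `v` stays white with probability at most `1/2`. A sum of two such geometric waiting times
exceeds `t` with probability at most `2 (t + 1) 2⁻ᵗ`, and a union bound over the at most `n²`
vertices with `t = ⌈6 ln n⌉`, so that `2ᵗ ≥ n⁴`, leaves a failure probability
`O(log n / n²) = o(1/n)`.
-/

open Filter Real

section Powerset

variable {α : Type*} [DecidableEq α]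

lemma sum_powerset_prod_ite_eq_one (p : α → ℝ) (T : Finset α) :
    ∑ S ∈ T.powerset, ∏ x ∈ T, (if x ∈ S then p x else 1 - p x) = 1 := by
  calc ∑ S ∈ T.powerset, ∏ x ∈ T, (if x ∈ S then p x else 1 - p x)
      = ∑ S ∈ T.powerset, (∏ x ∈ S, p x) * ∏ x ∈ T \ S, (1 - p x) := by
        refine sum_congr rfl fun S hS => ?_
        rw [prod_ite, filter_mem_eq_inter, inter_eq_right.2 (mem_powerset.1 hS),
          ← sdiff_eq_filter]
    _ = ∏ x ∈ T, (p x + (1 - p x)) := (prod_add _ _ T).symm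
    _ = 1 := prod_eq_one fun x _ => add_sub_cancel _ _

lemma sum_powerset_prod_ite_mul_ite (p : α → ℝ) {T : Finset α} {a : α} (ha : a ∈ T) (x y : ℝ) :
    ∑ S ∈ T.powerset, (∏ z ∈ T, (if z ∈ S then p z else 1 - p z)) * (if a ∈ S then x else y) =
      p a * x + (1 - p a) * y := by
  set q : Finset α → ℝ := fun S => ∏ z ∈ T.erase a, (if z ∈ S then p z else 1 - p z)
  have hq : ∀ S, q (insert a S) = q S := fun S =>
    prod_congr rfl fun z hz => by simp [ne_of_mem_erase hz]
  rw [← insert_erase ha, sum_powerset_insert (notMem_erase a T)]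
  have hS : ∀ S ∈ (T.erase a).powerset, a ∉ S := fun S hS h =>
    notMem_erase a T (mem_powerset.1 hS h)
  calc _ = ∑ S ∈ (T.erase a).powerset, (1 - p a) * y * q S +
        ∑ S ∈ (T.erase a).powerset, p a * x * q (insert a S) := by
        congr 1 <;> refine sum_congr rfl fun S hSm => ?_ <;>
          simp [prod_insert (notMem_erase a T), hS S hSm, q] <;> ring
    _ = p a * x + (1 - p a) * y := by
        simp only [hq, ← mul_sum, q, sum_powerset_prod_ite_eq_one]
        ring

end Powerset

section ForcingProcess

variable {V : Type} [Fintype V] [DecidableEq V] (G : SimpleGraph V) [DecidableRel G.Adj]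

lemma card_closedNbhd_inter_le_degree {Z : Finset V} {u v : V} (huv : G.Adj u v) (hv : v ∉ Z) :
    #(insert u (G.neighborFinset u) ∩ Z) ≤ G.degree u := by
  have hvN : v ∈ insert u (G.neighborFinset u) :=
    mem_insert_of_mem ((G.mem_neighborFinset u v).2 huv)
  calc #(insert u (G.neighborFinset u) ∩ Z)
      ≤ #((insert u (G.neighborFinset u)).erase v) :=
        card_le_card fun x hx =>
          mem_erase.2 ⟨fun h => hv (h ▸ (mem_inter.1 hx).2), (mem_inter.1 hx).1⟩
    _ = G.degree u := by
        rw [card_erase_of_mem hvN, card_insert_of_notMem (G.notMem_neighborFinset_self u),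
          G.card_neighborFinset_eq_degree, Nat.add_sub_cancel]

lemma one_sub_closedNbhd_ratio_mem_Icc {Z : Finset V} {u v : V} (huv : G.Adj u v) (hv : v ∉ Z) :
    1 - (#(insert u (G.neighborFinset u) ∩ Z) : ℝ) / G.degree u ∈ Set.Icc 0 1 := by
  have hdeg : (0 : ℝ) < G.degree u := by
    exact_mod_cast G.degree_pos_iff_exists_adj u |>.2 ⟨v, huv⟩
  have hle : (#(insert u (G.neighborFinset u) ∩ Z) : ℝ) ≤ G.degree u := by
    exact_mod_cast card_closedNbhd_inter_le_degree G huv hv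
  constructor
  · linarith [(div_le_one hdeg).2 hle]
  · linarith [div_nonneg (Nat.cast_nonneg (α := ℝ) #(insert u (G.neighborFinset u) ∩ Z)) hdeg.le]

lemma forceProb_mem_Icc {Z : Finset V} {v : V} (hv : v ∉ Z) : forceProb G Z v ∈ Set.Icc 0 1 := by
  have hfactor := fun u (hu : u ∈ Z.filter (G.Adj · v)) =>
    one_sub_closedNbhd_ratio_mem_Icc G (mem_filter.1 hu).2 hv
  unfold forceProb
  constructor
  · linarith [prod_le_one (fun u hu => (hfactor u hu).1) (fun u hu => (hfactor u hu).2)]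
  · linarith [prod_nonneg fun u hu => (hfactor u hu).1]

lemma div_degree_le_forceProb {Z : Finset V} {u v : V} (hu : u ∈ Z) (huv : G.Adj u v)
    (hv : v ∉ Z) : (#(insert u (G.neighborFinset u) ∩ Z) : ℝ) / G.degree u ≤ forceProb G Z v := by
  have hfactor := fun w (hw : w ∈ Z.filter (G.Adj · v)) =>
    one_sub_closedNbhd_ratio_mem_Icc G (mem_filter.1 hw).2 hv
  have hprod := prod_le_prod_of_subset_of_le_one (singleton_subset_iff.2 (mem_filter.2 ⟨hu, huv⟩))
    (fun w hw => (hfactor w hw).1) (fun w hw _ => (hfactor w hw).2)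
  rw [prod_singleton] at hprod
  unfold forceProb
  linarith

lemma stepProb_nonneg (Z W : Finset V) : 0 ≤ stepProb G Z W := by
  unfold stepProb
  split_ifs
  · refine prod_nonneg fun v hv => ?_
    have := forceProb_mem_Icc G (mem_compl.1 hv)
    split_ifs <;> linarith [this.1, this.2]
  · exact le_rfl

lemma stepProb_of_not_subset {Z W : Finset V} (h : ¬ Z ⊆ W) : stepProb G Z W = 0 := if_neg h

lemma sum_stepProb_mul (Z : Finset V) (F : Finset V → ℝ) :
    ∑ W, stepProb G Z W * F W = ∑ S ∈ Zᶜ.powerset,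
      (∏ v ∈ Zᶜ, (if v ∈ S then forceProb G Z v else 1 - forceProb G Z v)) * F (Z ∪ S) := by
  have hdisj : ∀ S ∈ Zᶜ.powerset, Disjoint Z S := fun S hS =>
    subset_compl_iff_disjoint_left.1 (mem_powerset.1 hS)
  have hinj : Set.InjOn (Z ∪ ·) Zᶜ.powerset := fun S hS S' hS' h => by
    rw [← union_sdiff_cancel_left (hdisj S hS), ← union_sdiff_cancel_left (hdisj S' hS')]
    exact congrArg (· \ Z) h
  rw [← sum_subset (subset_univ (Zᶜ.powerset.image (Z ∪ ·))), sum_image hinj]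
  · refine sum_congr rfl fun S hS => ?_
    rw [stepProb, if_pos subset_union_left]
    congr 1
    refine prod_congr rfl fun v hv => ?_
    simp [mem_compl.1 hv]
  · intro W _ hW
    suffices ¬ Z ⊆ W by rw [stepProb_of_not_subset G this, zero_mul]
    intro hZW
    refine hW (mem_image.2 ⟨W \ Z, mem_powerset.2 fun x hx => ?_, union_sdiff_of_subset hZW⟩)
    exact mem_compl.2 (mem_sdiff.1 hx).2

lemma sum_stepProb (Z : Finset V) : ∑ W, stepProb G Z W = 1 := by
  have h := sum_stepProb_mul G Z 1
  simp only [Pi.one_apply, mul_one] at h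
  rw [h, sum_powerset_prod_ite_eq_one]

lemma sum_stepProb_mul_ite {Z : Finset V} {v : V} (hv : v ∉ Z) (x y : ℝ) :
    ∑ W, stepProb G Z W * (if v ∈ W then x else y) =
      forceProb G Z v * x + (1 - forceProb G Z v) * y := by
  rw [sum_stepProb_mul, ← sum_powerset_prod_ite_mul_ite _ (mem_compl.2 hv)]
  simp [hv]

lemma sum_stepProb_mul_le_sum_stepProb_mul {Z : Finset V} {f g : Finset V → ℝ}
    (h : ∀ W, Z ⊆ W → f W ≤ g W) : ∑ W, stepProb G Z W * f W ≤ ∑ W, stepProb G Z W * g W := by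
  refine sum_le_sum fun W _ => ?_
  by_cases hZW : Z ⊆ W
  · exact mul_le_mul_of_nonneg_left (h W hZW) (stepProb_nonneg G Z W)
  · simp [stepProb_of_not_subset G hZW]

lemma pzfProb_nonneg : ∀ (t : ℕ) (Z Z' : Finset V), 0 ≤ pzfProb G t Z Z'
  | 0, Z, Z' => by unfold pzfProb; split_ifs <;> norm_num
  | t + 1, Z, Z' =>
    sum_nonneg fun W _ => mul_nonneg (stepProb_nonneg G Z W) (pzfProb_nonneg t W Z')

lemma pzfProb_of_not_subset : ∀ (t : ℕ) {Z Z' : Finset V}, ¬ Z ⊆ Z' → pzfProb G t Z Z' = 0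
  | 0, _, _, h => if_neg fun he => h he.ge
  | t + 1, Z, Z', h => sum_eq_zero fun W _ => by
    by_cases hZW : Z ⊆ W
    · rw [pzfProb_of_not_subset t fun hWZ' => h (hZW.trans hWZ'), mul_zero]
    · rw [stepProb_of_not_subset G hZW, zero_mul]

lemma sum_pzfProb : ∀ (t : ℕ) (Z : Finset V), ∑ Z', pzfProb G t Z Z' = 1
  | 0, Z => by simp [pzfProb]
  | t + 1, Z => by
    simp only [pzfProb]
    rw [sum_comm]
    simp only [← mul_sum, sum_pzfProb t, mul_one, sum_stepProb]

noncomputable def whiteProb (t : ℕ) (Z : Finset V) (v : V) : ℝ :=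
  ∑ Z' with v ∉ Z', pzfProb G t Z Z'

lemma whiteProb_le_one (t : ℕ) (Z : Finset V) (v : V) : whiteProb G t Z v ≤ 1 :=
  (sum_le_sum_of_subset_of_nonneg (filter_subset _ _) fun Z' _ _ => pzfProb_nonneg G t Z Z').trans
    (sum_pzfProb G t Z).le

lemma whiteProb_of_mem {Z : Finset V} {v : V} (t : ℕ) (hv : v ∈ Z) : whiteProb G t Z v = 0 :=
  sum_eq_zero fun _ hZ' => pzfProb_of_not_subset G t fun h => (mem_filter.1 hZ').2 (h hv)

lemma whiteProb_succ (t : ℕ) (Z : Finset V) (v : V) :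
    whiteProb G (t + 1) Z v = ∑ W, stepProb G Z W * whiteProb G t W v := by
  simp only [whiteProb, pzfProb, mul_sum]
  exact sum_comm

lemma sum_filter_not_subset_le_sum_whiteProb (t : ℕ) (Z T : Finset V) :
    ∑ Z' with ¬ T ⊆ Z', pzfProb G t Z Z' ≤ ∑ v ∈ T, whiteProb G t Z v := by
  simp only [whiteProb, sum_filter]
  rw [sum_comm]
  refine sum_le_sum fun Z' _ => ?_
  have hterm : ∀ v ∈ T, 0 ≤ if v ∉ Z' then pzfProb G t Z Z' else 0 := fun v _ => by
    split_ifs <;> simp [pzfProb_nonneg]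
  by_cases hT : T ⊆ Z'
  · simpa [hT] using sum_nonneg hterm
  · obtain ⟨v, hvT, hvZ'⟩ := not_subset.1 hT
    simpa [hT, hvZ'] using single_le_sum hterm hvT

variable {G}

theorem whiteProb_le_pow {S : Finset V} {v : V} {b : ℝ} (hb : 0 ≤ b)
    (hv : ∀ Z, S ⊆ Z → v ∉ Z → 1 - b ≤ forceProb G Z v) :
    ∀ (t : ℕ) {Z : Finset V}, S ⊆ Z → whiteProb G t Z v ≤ b ^ t
  | 0, Z, _ => by simpa using whiteProb_le_one G 0 Z v
  | t + 1, Z, hZ => by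
    by_cases hvZ : v ∈ Z
    · rw [whiteProb_of_mem G _ hvZ]
      positivity
    have hbound : ∀ W, Z ⊆ W → whiteProb G t W v ≤ if v ∈ W then 0 else b ^ t := fun W hZW => by
      split_ifs with hvW
      · exact (whiteProb_of_mem G t hvW).le
      · exact whiteProb_le_pow hb hv t (hZ.trans hZW)
    calc whiteProb G (t + 1) Z v
        ≤ ∑ W, stepProb G Z W * (if v ∈ W then 0 else b ^ t) := by
          rw [whiteProb_succ]
          exact sum_stepProb_mul_le_sum_stepProb_mul G hbound
      _ = (1 - forceProb G Z v) * b ^ t := by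
          rw [sum_stepProb_mul_ite G hvZ, mul_zero, zero_add]
      _ ≤ b ^ (t + 1) := by
          rw [pow_succ']
          exact mul_le_mul_of_nonneg_right (by linarith [hv Z hZ hvZ]) (by positivity)

theorem whiteProb_le_of_relay {S : Finset V} {u v : V} {b : ℝ} (hb0 : 0 < b) (hb1 : b ≤ 1)
    (hu : ∀ Z, S ⊆ Z → u ∉ Z → 1 - b ≤ forceProb G Z u)
    (hv : ∀ Z, insert u S ⊆ Z → v ∉ Z → 1 - b ≤ forceProb G Z v) :
    ∀ (t : ℕ) {Z : Finset V}, S ⊆ Z → whiteProb G t Z v ≤ (t + 1) * b ^ t / b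
  | 0, Z, _ => by
    rw [Nat.cast_zero, zero_add, one_mul, pow_zero]
    exact (whiteProb_le_one G 0 Z v).trans (one_le_one_div hb0 hb1)
  | t + 1, Z, hZ => by
    have hbt : 0 ≤ b ^ t := by positivity
    set B := (t + 1) * b ^ t / b with hB
    have hbB : b * B = (t + 1) * b ^ t := by rw [hB]; field_simp
    have hpow_le_B : b ^ t ≤ B := by
      rw [hB, le_div_iff₀ hb0]
      nlinarith
    have htarget : ((t + 1 : ℕ) + 1) * b ^ (t + 1) / b = (t + 2) * b ^ t := by
      push_cast; field_simp; ring
    rw [htarget]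
    by_cases huZ : u ∈ Z
    · calc whiteProb G (t + 1) Z v ≤ b ^ (t + 1) :=
            whiteProb_le_pow hb0.le hv (t + 1) (insert_subset huZ hZ)
        _ ≤ (t + 2) * b ^ t := by rw [pow_succ']; nlinarith
    have hbound : ∀ W, Z ⊆ W → whiteProb G t W v ≤ if u ∈ W then b ^ t else B := fun W hZW => by
      split_ifs with huW
      · exact whiteProb_le_pow hb0.le hv t (insert_subset huW (hZ.trans hZW))
      · exact whiteProb_le_of_relay hb0 hb1 hu hv t (hZ.trans hZW)
    have hstay : 1 - forceProb G Z u ≤ b := by linarith [hu Z hZ huZ]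
    calc whiteProb G (t + 1) Z v
        ≤ ∑ W, stepProb G Z W * (if u ∈ W then b ^ t else B) := by
          rw [whiteProb_succ]
          exact sum_stepProb_mul_le_sum_stepProb_mul G hbound
      _ = b ^ t + (1 - forceProb G Z u) * (B - b ^ t) := by
          rw [sum_stepProb_mul_ite G huZ]; ring
      _ ≤ b ^ t + b * (B - b ^ t) := by
          linarith [mul_le_mul_of_nonneg_right hstay (sub_nonneg.2 hpow_le_B)]
      _ ≤ (t + 2) * b ^ t := by nlinarith

end ForcingProcess

section Grid

lemma gridGraph_adj_iff {m n : ℕ} {p q : Fin m × Fin n} :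
    (gridGraph m n).Adj p q ↔
      (p.1 = q.1 ∧ (p.2.val + 1 = q.2.val ∨ q.2.val + 1 = p.2.val)) ∨
      (p.2 = q.2 ∧ (p.1.val + 1 = q.1.val ∨ q.1.val + 1 = p.1.val)) := by
  simp only [gridGraph, SimpleGraph.fromRel_adj, ne_eq, Prod.ext_iff, Fin.ext_iff]
  omega

lemma gridGraph_degree_le_four {m n : ℕ} (p : Fin m × Fin n) : (gridGraph m n).degree p ≤ 4 := by
  let direction : Fin m × Fin n → Fin 4 := fun q =>
    if q.1 = p.1 then (if p.2 < q.2 then 0 else 1) else (if p.1 < q.1 then 2 else 3)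
  rw [← SimpleGraph.card_neighborFinset_eq_degree, ← Fintype.card_fin 4, ← card_univ]
  refine card_le_card_of_injOn direction (fun _ _ => mem_coe.2 (mem_univ _)) ?_
  intro q hq r hr hqr
  simp only [mem_coe, SimpleGraph.mem_neighborFinset, gridGraph_adj_iff] at hq hr
  simp only [direction, Prod.ext_iff, Fin.ext_iff, Fin.lt_def] at hqr ⊢
  split_ifs at hqr <;> omega

lemma mem_psq {n M k : ℕ} {p : Fin n × Fin n} :
    p ∈ psq n M k ↔ (M ≤ p.1.val + k ∧ p.1.val ≤ M + k) ∧ (M ≤ p.2.val + k ∧ p.2.val ≤ M + k) := by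
  simp [psq]

lemma three_le_card_closedNbhd_inter_psq {n M k : ℕ} (hn : n = 2 * M + 1) (hk : 1 ≤ k)
    (hkM : k ≤ M) {w : Fin n × Fin n} (hw : w ∈ psq n M k) :
    3 ≤ #(insert w ((gridGraph n n).neighborFinset w) ∩ psq n M k) := by
  rw [mem_psq] at hw
  let a : Fin n × Fin n :=
    (⟨if w.1.val < M then w.1.val + 1 else w.1.val - 1, by split_ifs <;> omega⟩, w.2)
  let b : Fin n × Fin n :=
    (w.1, ⟨if w.2.val < M then w.2.val + 1 else w.2.val - 1, by split_ifs <;> omega⟩)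
  refine two_lt_card_iff.2 ⟨w, a, b, ?_, ?_, ?_, ?_, ?_, ?_⟩ <;>
    simp only [mem_inter, mem_insert, SimpleGraph.mem_neighborFinset, gridGraph_adj_iff, mem_psq,
      a, b, ne_eq, Prod.ext_iff, Fin.ext_iff, true_or, true_and, and_true] <;>
    (try split_ifs) <;> omega

lemma exists_relay_of_mem_psq_succ {n M k : ℕ} (hn : n = 2 * M + 1) (hk : 1 ≤ k) (hkM : k + 1 ≤ M)
    {v : Fin n × Fin n} (hv : v ∈ psq n M (k + 1)) :
    ∃ u w, w ∈ psq n M k ∧ (gridGraph n n).Adj w u ∧ (u = v ∨ (gridGraph n n).Adj u v) := by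
  rw [mem_psq] at hv
  let u : Fin n × Fin n := (v.1, ⟨min (max v.2.val (M - k)) (M + k), by omega⟩)
  let w : Fin n × Fin n :=
    (⟨if v.1.val < M then v.1.val + 1 else v.1.val - 1, by split_ifs <;> omega⟩, u.2)
  refine ⟨u, w, ?_, ?_, ?_⟩
  · simp only [mem_psq, w, u]; split_ifs <;> omega
  · simp only [gridGraph_adj_iff, w, u, Fin.ext_iff, true_and]
    split_ifs <;> omega
  · simp only [gridGraph_adj_iff, u, Prod.ext_iff, Fin.ext_iff, true_and]
    omega

lemma le_forceProb_gridGraph {m n : ℕ} {Z : Finset (Fin m × Fin n)} {u v : Fin m × Fin n} {j : ℕ}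
    (hu : u ∈ Z) (huv : (gridGraph m n).Adj u v) (hv : v ∉ Z)
    (hj : j ≤ #(insert u ((gridGraph m n).neighborFinset u) ∩ Z)) :
    (j : ℝ) / 4 ≤ forceProb (gridGraph m n) Z v := by
  have hdeg : (0 : ℝ) < (gridGraph m n).degree u := by
    exact_mod_cast (gridGraph m n).degree_pos_iff_exists_adj u |>.2 ⟨v, huv⟩
  calc (j : ℝ) / 4
      ≤ #(insert u ((gridGraph m n).neighborFinset u) ∩ Z) / (gridGraph m n).degree u :=
        div_le_div₀ (by positivity) (by exact_mod_cast hj) hdeg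
          (by exact_mod_cast gridGraph_degree_le_four u)
    _ ≤ forceProb (gridGraph m n) Z v := div_degree_le_forceProb _ hu huv hv

lemma whiteProb_gridGraph_le {n M k : ℕ} (hn : n = 2 * M + 1) (hk : 1 ≤ k) (hkM : k + 1 ≤ M)
    {v : Fin n × Fin n} (hv : v ∈ psq n M (k + 1)) (t : ℕ) {Z : Finset (Fin n × Fin n)}
    (hZ : psq n M k ⊆ Z) :
    whiteProb (gridGraph n n) t Z v ≤ (t + 1) * (1 / 2) ^ t / (1 / 2) := by
  obtain ⟨u, w, hw, hwu, huv⟩ := exists_relay_of_mem_psq_succ hn hk hkM hv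
  refine whiteProb_le_of_relay (S := psq n M k) (u := u) (by norm_num) (by norm_num) ?_ ?_ t hZ
  · intro Z hSZ huZ
    have h3 := (three_le_card_closedNbhd_inter_psq hn hk (by omega) hw).trans
      (card_le_card (inter_subset_inter_left hSZ))
    linarith [le_forceProb_gridGraph (hSZ hw) hwu huZ h3]
  · intro Z huSZ hvZ
    have huZ : u ∈ Z := huSZ (mem_insert_self u _)
    have hadj : (gridGraph n n).Adj u v := huv.resolve_left fun h => hvZ (h ▸ huZ)
    have h2 : 2 ≤ #(insert u ((gridGraph n n).neighborFinset u) ∩ Z) :=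
      one_lt_card_iff.2 ⟨u, w, mem_inter.2 ⟨mem_insert_self u _, huZ⟩,
        mem_inter.2 ⟨mem_insert_of_mem (((gridGraph n n).mem_neighborFinset u w).2 hwu.symm),
          huSZ (mem_insert_of_mem hw)⟩, hwu.ne.symm⟩
    linarith [le_forceProb_gridGraph huZ hadj hvZ h2]

lemma card_psq_le {n M k : ℕ} : (#(psq n M k) : ℝ) ≤ n ^ 2 := by
  have h : #(psq n M k) ≤ n * n := by simpa using card_le_univ (psq n M k)
  exact_mod_cast h.trans (sq n).ge

end Grid

lemma pow_four_le_two_pow_ceil_six_log {x : ℝ} (hx : 1 ≤ x) : x ^ 4 ≤ 2 ^ ⌈6 * log x⌉₊ := by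
  have hlog : 0 ≤ log x := log_nonneg hx
  have hexp : 4 * log x ≤ ⌈6 * log x⌉₊ * log 2 := by
    nlinarith [Nat.le_ceil (6 * log x), log_two_gt_d9]
  calc x ^ 4 = exp (4 * log x) := by
        rw [← exp_log (by linarith : 0 < x), ← exp_nat_mul, log_exp]; norm_num
    _ ≤ exp (⌈6 * log x⌉₊ * log 2) := exp_le_exp.2 hexp
    _ = 2 ^ ⌈6 * log x⌉₊ := by rw [exp_nat_mul, exp_log two_pos]

lemma eventually_sq_mul_relayBound_le {c : ℝ} (hc : 0 < c) : ∀ᶠ n : ℕ in atTop,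
    (n : ℝ) ^ 2 * ((⌈6 * log n⌉₊ + 1) * (1 / 2) ^ ⌈6 * log n⌉₊ / (1 / 2)) ≤ c / n := by
  have hlog := isLittleO_log_id_atTop.bound (show 0 < c / 24 by positivity)
  filter_upwards [tendsto_natCast_atTop_atTop.eventually
    (hlog.and (eventually_ge_atTop (max 1 (8 / c))))] with n ⟨hlogn, hn⟩
  set t := ⌈6 * log n⌉₊
  have hn1 : (1 : ℝ) ≤ n := le_of_max_le_left hn
  have hn8 : 8 / c ≤ n := le_of_max_le_right hn
  have hlogn' : log n ≤ c / 24 * n := by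
    simpa [abs_of_nonneg (log_nonneg hn1), abs_of_nonneg (by linarith : (0:ℝ) ≤ n)] using hlogn
  have ht : (t : ℝ) < 6 * log n + 1 := Nat.ceil_lt_add_one (by positivity [log_nonneg hn1])
  have hcn : 8 ≤ c * n := by rwa [div_le_iff₀ hc, mul_comm] at hn8
  have h2t := pow_four_le_two_pow_ceil_six_log hn1
  have hn0 : (0 : ℝ) < n := by linarith
  rw [le_div_iff₀ hn0]
  calc (n : ℝ) ^ 2 * ((t + 1) * (1 / 2) ^ t / (1 / 2)) * n
        = n ^ 3 * (2 * (t + 1)) / 2 ^ t := by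
        field_simp
        rw [← mul_pow]
        norm_num
    _ ≤ n ^ 3 * (c * n) / 2 ^ t := by gcongr n ^ 3 * ?_ / _; linarith
    _ = c * n ^ 4 / 2 ^ t := by ring
    _ ≤ c := by rw [div_le_iff₀ (by positivity)]; gcongr

/-- If at some time all vertices of a `k`-principal-square of the grid are blue, then with
probability `1 - o(1/n)` all vertices of the `(k+1)`-principal-square are blue after a
further `6 ln n` rounds. -/
theorem stmt9 : ∀ c : ℝ, 0 < c → ∃ N : ℕ, ∀ n M k : ℕ, N ≤ n → n = 2 * M + 1 →
    1 ≤ k → k + 1 ≤ M → ∀ Z : Finset (Fin n × Fin n), psq n M k ⊆ Z →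
    1 - c / n ≤
      ∑ Z' ∈ Finset.univ.filter (fun Z' : Finset (Fin n × Fin n) => psq n M (k + 1) ⊆ Z'),
        pzfProb (gridGraph n n) ⌈6 * Real.log n⌉₊ Z Z' := by
  intro c hc
  obtain ⟨N, hN⟩ := eventually_atTop.1 (eventually_sq_mul_relayBound_le hc)
  refine ⟨N, fun n M k hNn hn hk hkM Z hZ => ?_⟩
  set t := ⌈6 * Real.log n⌉₊
  have hfail : ∑ Z' with ¬ psq n M (k + 1) ⊆ Z', pzfProb (gridGraph n n) t Z Z' ≤ c / n :=
    calc _ ≤ ∑ v ∈ psq n M (k + 1), whiteProb (gridGraph n n) t Z v :=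
          sum_filter_not_subset_le_sum_whiteProb _ t Z _
      _ ≤ ∑ _v ∈ psq n M (k + 1), ((t : ℝ) + 1) * (1 / 2) ^ t / (1 / 2) :=
          sum_le_sum fun v hv => whiteProb_gridGraph_le hn hk hkM hv t hZ
      _ ≤ (n : ℝ) ^ 2 * (((t : ℝ) + 1) * (1 / 2) ^ t / (1 / 2)) := by
          rw [sum_const, nsmul_eq_mul]
          gcongr
          exact card_psq_le
      _ ≤ c / n := hN n hNn
  have htotal := sum_filter_add_sum_filter_not univ (psq n M (k + 1) ⊆ ·)
    (pzfProb (gridGraph n n) t Z)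
  rw [sum_pzfProb] at htotal
  linarith
end

section
/- Grid sub-square persistence: suppose at time t a k×k sub-grid of vertices of G_{n×n} is entirely blue (k ≥ 2), and let v be its top-right corner. If any neighbour of v turns blue at time t+1 under probabilistic zero forcing, then that neighbour is the top-right corner of an entirely blue (k-1)×(k-1) sub-grid at time t+1. -/
open Finset

/-- The `k × k` sub-grid of the `n × n` grid whose top-right corner is `v`. -/
def sqCorner (n : ℕ) (v : Fin n × Fin n) (k : ℕ) : Finset (Fin n × Fin n) :=
  Finset.univ.filter (fun p =>
    p.1.val ≤ v.1.val ∧ v.1.val < p.1.val + k ∧ p.2.val ≤ v.2.val ∧ v.2.val < p.2.val + k)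

lemma forceProb_eq_one {V : Type} [Fintype V] [DecidableEq V]
    (G : SimpleGraph V) [DecidableRel G.Adj] (Z : Finset V) (p u : V)
    (hu : u ∈ Z) (hadj : G.Adj u p) (hd : 0 < G.degree u)
    (hc : ((insert u (G.neighborFinset u)) ∩ Z).card = G.degree u) :
    forceProb G Z p = 1 := by
  unfold forceProb
  rw [Finset.prod_eq_zero (i := u) (by simp [hu, hadj])]
  · ring
  · rw [hc, div_self (by positivity)]
    ring

lemma stepProb_subset {V : Type} [Fintype V] [DecidableEq V]
    (G : SimpleGraph V) [DecidableRel G.Adj] {Z Z' : Finset V}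
    (h : 0 < stepProb G Z Z') : Z ⊆ Z' := by
  by_contra hc
  simp [stepProb, hc] at h

lemma stepProb_forced {V : Type} [Fintype V] [DecidableEq V]
    (G : SimpleGraph V) [DecidableRel G.Adj] {Z Z' : Finset V}
    (h : 0 < stepProb G Z Z') (p : V) (hp : p ∉ Z) (hf : forceProb G Z p = 1) :
    p ∈ Z' := by
  by_contra hp'
  rw [stepProb, if_pos (stepProb_subset G h)] at h
  rw [Finset.prod_eq_zero (i := p) (by simpa using hp) (by simp [hp', hf])] at h
  exact lt_irrefl 0 h

lemma grid_adj {n : ℕ} (p q : Fin n × Fin n) :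
    (gridGraph n n).Adj p q ↔
      ((p.1.val = q.1.val ∧ (p.2.val + 1 = q.2.val ∨ q.2.val + 1 = p.2.val)) ∨
       (p.2.val = q.2.val ∧ (p.1.val + 1 = q.1.val ∨ q.1.val + 1 = p.1.val))) := by
  simp only [gridGraph, SimpleGraph.fromRel_adj, ne_eq, Prod.ext_iff, Fin.ext_iff]
  omega

lemma interior_nbhd {n : ℕ} (u : Fin n × Fin n) (h1 : 0 < u.1.val) (h2 : u.1.val + 1 < n)
    (h3 : 0 < u.2.val) (h4 : u.2.val + 1 < n) :
    (gridGraph n n).neighborFinset u =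
      {(⟨u.1.val - 1, by omega⟩, u.2), (⟨u.1.val + 1, h2⟩, u.2),
       (u.1, ⟨u.2.val - 1, by omega⟩), (u.1, ⟨u.2.val + 1, h4⟩)} := by
  ext q
  simp only [SimpleGraph.mem_neighborFinset, grid_adj, Finset.mem_insert,
    Finset.mem_singleton, Prod.ext_iff, Fin.ext_iff]
  omega

lemma interior_degree {n : ℕ} (u : Fin n × Fin n) (h1 : 0 < u.1.val) (h2 : u.1.val + 1 < n)
    (h3 : 0 < u.2.val) (h4 : u.2.val + 1 < n) :
    (gridGraph n n).degree u = 4 := by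
  rw [SimpleGraph.degree, interior_nbhd u h1 h2 h3 h4]
  rw [card_insert_of_notMem, card_insert_of_notMem, card_insert_of_notMem,
    card_singleton] <;>
    simp only [mem_insert, mem_singleton, Prod.ext_iff, Fin.ext_iff, not_or] <;> omega

lemma inter_card_right {n : ℕ} (u : Fin n × Fin n) (h1 : 0 < u.1.val) (h2 : u.1.val + 1 < n)
    (h3 : 0 < u.2.val) (h4 : u.2.val + 1 < n) (Z : Finset (Fin n × Fin n)) (hu : u ∈ Z)
    (hA : ((⟨u.1.val - 1, by omega⟩ : Fin n), u.2) ∈ Z)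
    (hC : (u.1, (⟨u.2.val - 1, by omega⟩ : Fin n)) ∈ Z)
    (hD : (u.1, (⟨u.2.val + 1, h4⟩ : Fin n)) ∈ Z)
    (hB : ((⟨u.1.val + 1, h2⟩ : Fin n), u.2) ∉ Z) :
    ((insert u ((gridGraph n n).neighborFinset u)) ∩ Z).card = 4 := by
  rw [interior_nbhd u h1 h2 h3 h4]
  have hset : (insert u ({(⟨u.1.val - 1, by omega⟩, u.2), (⟨u.1.val + 1, h2⟩, u.2),
       (u.1, ⟨u.2.val - 1, by omega⟩), (u.1, ⟨u.2.val + 1, h4⟩)} : Finset (Fin n × Fin n))) ∩ Z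
      = {u, (⟨u.1.val - 1, by omega⟩, u.2), (u.1, ⟨u.2.val - 1, by omega⟩),
          (u.1, ⟨u.2.val + 1, h4⟩)} := by
    ext q
    simp only [mem_inter, mem_insert, mem_singleton]
    constructor
    · rintro ⟨rfl | rfl | rfl | rfl | rfl, hq⟩ <;> tauto
    · rintro (rfl | rfl | rfl | rfl) <;> exact ⟨by tauto, by assumption⟩
  rw [hset]
  rw [card_insert_of_notMem, card_insert_of_notMem, card_insert_of_notMem,
    card_singleton] <;>
    simp only [mem_insert, mem_singleton, Prod.ext_iff, Fin.ext_iff, not_or] <;> omega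

lemma inter_card_top {n : ℕ} (u : Fin n × Fin n) (h1 : 0 < u.1.val) (h2 : u.1.val + 1 < n)
    (h3 : 0 < u.2.val) (h4 : u.2.val + 1 < n) (Z : Finset (Fin n × Fin n)) (hu : u ∈ Z)
    (hA : ((⟨u.1.val - 1, by omega⟩ : Fin n), u.2) ∈ Z)
    (hB : ((⟨u.1.val + 1, h2⟩ : Fin n), u.2) ∈ Z)
    (hC : (u.1, (⟨u.2.val - 1, by omega⟩ : Fin n)) ∈ Z)
    (hD : (u.1, (⟨u.2.val + 1, h4⟩ : Fin n)) ∉ Z) :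
    ((insert u ((gridGraph n n).neighborFinset u)) ∩ Z).card = 4 := by
  rw [interior_nbhd u h1 h2 h3 h4]
  have hset : (insert u ({(⟨u.1.val - 1, by omega⟩, u.2), (⟨u.1.val + 1, h2⟩, u.2),
       (u.1, ⟨u.2.val - 1, by omega⟩), (u.1, ⟨u.2.val + 1, h4⟩)} : Finset (Fin n × Fin n))) ∩ Z
      = {u, (⟨u.1.val - 1, by omega⟩, u.2), (⟨u.1.val + 1, h2⟩, u.2),
          (u.1, ⟨u.2.val - 1, by omega⟩)} := by
    ext q
    simp only [mem_inter, mem_insert, mem_singleton]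
    constructor
    · rintro ⟨rfl | rfl | rfl | rfl | rfl, hq⟩ <;> tauto
    · rintro (rfl | rfl | rfl | rfl) <;> exact ⟨by tauto, by assumption⟩
  rw [hset]
  rw [card_insert_of_notMem, card_insert_of_notMem, card_insert_of_notMem,
    card_singleton] <;>
    simp only [mem_insert, mem_singleton, Prod.ext_iff, Fin.ext_iff, not_or] <;> omega

set_option linter.unreachableTactic false in
set_option linter.unusedTactic false in
/-- Grid sub-square persistence: if at some time a `k × k` sub-grid (with `k ≥ 2`) with
top-right corner `v` is entirely blue, and a neighbour `w` of `v` turns blue in the next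
round of probabilistic zero forcing, then `w` is the top-right corner of an entirely blue
`(k-1) × (k-1)` sub-grid. -/
theorem stmt11 (n k : ℕ) (hk : 2 ≤ k) (v : Fin n × Fin n)
    (h1 : k ≤ v.1.val) (h2 : k ≤ v.2.val) (h3 : v.1.val + 1 < n) (h4 : v.2.val + 1 < n)
    (Z Z' : Finset (Fin n × Fin n)) (hZ : sqCorner n v k ⊆ Z)
    (hstep : 0 < stepProb (gridGraph n n) Z Z') :
    ∀ w : Fin n × Fin n, (gridGraph n n).Adj v w → w ∈ Z' →
      sqCorner n w (k - 1) ⊆ Z' := by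
  have hZZ' : Z ⊆ Z' := stepProb_subset _ hstep
  intro w hadj hw p hp
  simp only [sqCorner, mem_filter, mem_univ, true_and] at hp
  obtain ⟨hp1, hp2, hp3, hp4⟩ := hp
  have hmem : ∀ q : Fin n × Fin n, q.1.val ≤ v.1.val → v.1.val < q.1.val + k →
      q.2.val ≤ v.2.val → v.2.val < q.2.val + k → q ∈ Z := fun q a b c d =>
    hZ (by simp only [sqCorner, mem_filter, mem_univ, true_and]; exact ⟨a, b, c, d⟩)
  rcases (grid_adj v w).1 hadj with ⟨he, hor | hor⟩ | ⟨he, hor | hor⟩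
  · -- w = (v1, v2+1) : top case
    by_cases hpo : p.2.val ≤ v.2.val
    · exact hZZ' (hmem p (by first | (simp [hu_def]; omega) | simp [hu_def] | omega) (by first | (simp [hu_def]; omega) | simp [hu_def] | omega) (by first | (simp [hu_def]; omega) | simp [hu_def] | omega) (by first | (simp [hu_def]; omega) | simp [hu_def] | omega))
    · have hp1' : p.2.val = v.2.val + 1 := by omega
      by_cases hq : p.1.val = v.1.val
      · have : p = w := Prod.ext (Fin.ext (by first | (simp [hu_def]; omega) | simp [hu_def] | omega)) (Fin.ext (by first | (simp [hu_def]; omega) | simp [hu_def] | omega))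
        rwa [this]
      · by_cases hpz : p ∈ Z
        · exact hZZ' hpz
        · refine stepProb_forced _ hstep p hpz ?_
          set u : Fin n × Fin n := (p.1, v.2) with hu_def
          have hi1 : 0 < u.1.val := by simp [hu_def]; omega
          have hi2 : u.1.val + 1 < n := by simp [hu_def]; omega
          have hi3 : 0 < u.2.val := by simp [hu_def]; omega
          have hi4 : u.2.val + 1 < n := by simp [hu_def]; omega
          have huZ : u ∈ Z := hmem u (by first | (simp [hu_def]; omega) | simp [hu_def] | omega) (by first | (simp [hu_def]; omega) | simp [hu_def] | omega)
            (by first | (simp [hu_def]; omega) | simp [hu_def] | omega) (by first | (simp [hu_def]; omega) | simp [hu_def] | omega)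
          refine forceProb_eq_one _ Z p u huZ ?_ ?_ ?_
          · exact (grid_adj u p).2 (Or.inl ⟨rfl, Or.inl (by first | (simp [hu_def]; omega) | simp [hu_def] | omega)⟩)
          · rw [interior_degree u hi1 hi2 hi3 hi4]; norm_num
          · rw [interior_degree u hi1 hi2 hi3 hi4]
            refine inter_card_top u hi1 hi2 hi3 hi4 Z huZ ?_ ?_ ?_ ?_
            · exact hmem _ (by first | (simp [hu_def]; omega) | simp [hu_def] | omega) (by first | (simp [hu_def]; omega) | simp [hu_def] | omega)
                (by first | (simp [hu_def]; omega) | simp [hu_def] | omega) (by first | (simp [hu_def]; omega) | simp [hu_def] | omega)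
            · exact hmem _ (by first | (simp [hu_def]; omega) | simp [hu_def] | omega) (by first | (simp [hu_def]; omega) | simp [hu_def] | omega)
                (by first | (simp [hu_def]; omega) | simp [hu_def] | omega) (by first | (simp [hu_def]; omega) | simp [hu_def] | omega)
            · exact hmem _ (by first | (simp [hu_def]; omega) | simp [hu_def] | omega) (by first | (simp [hu_def]; omega) | simp [hu_def] | omega)
                (by first | (simp [hu_def]; omega) | simp [hu_def] | omega) (by first | (simp [hu_def]; omega) | simp [hu_def] | omega)
            · have : (u.1, (⟨u.2.val + 1, hi4⟩ : Fin n)) = p :=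
                Prod.ext (Fin.ext (by first | (simp [hu_def]; omega) | simp [hu_def] | omega)) (Fin.ext (by first | (simp [hu_def]; omega) | simp [hu_def] | omega))
              rwa [this]
  · -- w = (v1, v2-1) : inside old square
    exact hZZ' (hmem p (by first | (simp [hu_def]; omega) | simp [hu_def] | omega) (by first | (simp [hu_def]; omega) | simp [hu_def] | omega) (by first | (simp [hu_def]; omega) | simp [hu_def] | omega) (by first | (simp [hu_def]; omega) | simp [hu_def] | omega))
  · -- w = (v1+1, v2) : right case
    by_cases hpo : p.1.val ≤ v.1.val
    · exact hZZ' (hmem p (by first | (simp [hu_def]; omega) | simp [hu_def] | omega) (by first | (simp [hu_def]; omega) | simp [hu_def] | omega) (by first | (simp [hu_def]; omega) | simp [hu_def] | omega) (by first | (simp [hu_def]; omega) | simp [hu_def] | omega))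
    · have hp1' : p.1.val = v.1.val + 1 := by omega
      by_cases hq : p.2.val = v.2.val
      · have : p = w := Prod.ext (Fin.ext (by first | (simp [hu_def]; omega) | simp [hu_def] | omega)) (Fin.ext (by first | (simp [hu_def]; omega) | simp [hu_def] | omega))
        rwa [this]
      · by_cases hpz : p ∈ Z
        · exact hZZ' hpz
        · refine stepProb_forced _ hstep p hpz ?_
          set u : Fin n × Fin n := (v.1, p.2) with hu_def
          have hi1 : 0 < u.1.val := by simp [hu_def]; omega
          have hi2 : u.1.val + 1 < n := by simp [hu_def]; omega
          have hi3 : 0 < u.2.val := by simp [hu_def]; omega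
          have hi4 : u.2.val + 1 < n := by simp [hu_def]; omega
          have huZ : u ∈ Z := hmem u (by first | (simp [hu_def]; omega) | simp [hu_def] | omega) (by first | (simp [hu_def]; omega) | simp [hu_def] | omega)
            (by first | (simp [hu_def]; omega) | simp [hu_def] | omega) (by first | (simp [hu_def]; omega) | simp [hu_def] | omega)
          refine forceProb_eq_one _ Z p u huZ ?_ ?_ ?_
          · exact (grid_adj u p).2 (Or.inr ⟨rfl, Or.inl (by first | (simp [hu_def]; omega) | simp [hu_def] | omega)⟩)
          · rw [interior_degree u hi1 hi2 hi3 hi4]; norm_num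
          · rw [interior_degree u hi1 hi2 hi3 hi4]
            refine inter_card_right u hi1 hi2 hi3 hi4 Z huZ ?_ ?_ ?_ ?_
            · exact hmem _ (by first | (simp [hu_def]; omega) | simp [hu_def] | omega) (by first | (simp [hu_def]; omega) | simp [hu_def] | omega)
                (by first | (simp [hu_def]; omega) | simp [hu_def] | omega) (by first | (simp [hu_def]; omega) | simp [hu_def] | omega)
            · exact hmem _ (by first | (simp [hu_def]; omega) | simp [hu_def] | omega) (by first | (simp [hu_def]; omega) | simp [hu_def] | omega)
                (by first | (simp [hu_def]; omega) | simp [hu_def] | omega) (by first | (simp [hu_def]; omega) | simp [hu_def] | omega)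
            · exact hmem _ (by first | (simp [hu_def]; omega) | simp [hu_def] | omega) (by first | (simp [hu_def]; omega) | simp [hu_def] | omega)
                (by first | (simp [hu_def]; omega) | simp [hu_def] | omega) (by first | (simp [hu_def]; omega) | simp [hu_def] | omega)
            · have : ((⟨u.1.val + 1, hi2⟩ : Fin n), u.2) = p :=
                Prod.ext (Fin.ext (by first | (simp [hu_def]; omega) | simp [hu_def] | omega)) (Fin.ext (by first | (simp [hu_def]; omega) | simp [hu_def] | omega))
              rwa [this]
  · -- w = (v1-1, v2) : inside old square
    exact hZZ' (hmem p (by first | (simp [hu_def]; omega) | simp [hu_def] | omega) (by first | (simp [hu_def]; omega) | simp [hu_def] | omega) (by first | (simp [hu_def]; omega) | simp [hu_def] | omega) (by first | (simp [hu_def]; omega) | simp [hu_def] | omega))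
end

section
/- The 4-state Markov chain with transition matrix P₂ = [[0,0,0,1],[1/16,9/32,3/32,9/16],[1/16,3/32,9/32,9/16],[1/256,15/256,15/256,225/256]] (states ordered (0,0),(0,1),(1,0),(1,1)) is irreducible and aperiodic, and its unique stationary distribution assigns probability μ₂ = 1/77 to the state (0,0). -/
open Finset

/-- The transition matrix `P₂` of the 4-state Markov chain on configurations of a 2-window,
with states ordered `(0,0), (0,1), (1,0), (1,1)`. -/
noncomputable def P2 : Matrix (Fin 4) (Fin 4) ℝ :=
  !![0, 0, 0, 1;
     1/16, 9/32, 3/32, 9/16;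
     1/16, 3/32, 9/32, 9/16;
     1/256, 15/256, 15/256, 225/256]

lemma P2_sq_pos (i j : Fin 4) : 0 < (P2 ^ 2) i j := by
  rw [pow_two]
  fin_cases i <;> fin_cases j <;>
    simp [Matrix.mul_apply, Fin.sum_univ_four, P2] <;> norm_num

lemma pi_unique (π : Fin 4 → ℝ) (h : (∀ i, 0 ≤ π i) ∧ (∑ i : Fin 4, π i = 1) ∧
    (∀ j : Fin 4, ∑ i : Fin 4, π i * P2 i j = π j)) :
    π = ![1/77, 6/77, 6/77, 64/77] := by
  obtain ⟨_, hsum, hst⟩ := h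
  have h0 := hst 0
  have h1 := hst 1
  have h2 := hst 2
  simp only [Fin.sum_univ_four, P2, Matrix.cons_val', Matrix.cons_val_zero,
    Matrix.cons_val_one, Matrix.head_cons, Matrix.head_fin_const, Matrix.empty_val',
    Matrix.cons_val_fin_one, Matrix.of_apply, Matrix.cons_val_succ,
    Matrix.cons_val_two, Matrix.cons_val_three, Matrix.tail_cons] at h0 h1 h2 hsum
  funext i
  fin_cases i <;> simp <;> linarith

/-- `P₂` is a stochastic matrix which is irreducible and aperiodic, and it has a unique
stationary distribution, which assigns probability `μ₂ = 1/77` to the state `(0,0)`. -/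
theorem stmt13 :
    (∀ i j : Fin 4, 0 ≤ P2 i j) ∧
    (∀ i : Fin 4, ∑ j : Fin 4, P2 i j = 1) ∧
    (∀ i j : Fin 4, ∃ t : ℕ, 0 < t ∧ 0 < (P2 ^ t) i j) ∧
    (∃ i : Fin 4, 0 < P2 i i) ∧
    (∃! π : Fin 4 → ℝ, (∀ i, 0 ≤ π i) ∧ (∑ i : Fin 4, π i = 1) ∧
      (∀ j : Fin 4, ∑ i : Fin 4, π i * P2 i j = π j)) ∧
    (∀ π : Fin 4 → ℝ, ((∀ i, 0 ≤ π i) ∧ (∑ i : Fin 4, π i = 1) ∧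
      (∀ j : Fin 4, ∑ i : Fin 4, π i * P2 i j = π j)) → π 0 = 1 / 77) := by
  refine ⟨?_, ?_, ?_, ?_, ?_, ?_⟩
  · intro i j; fin_cases i <;> fin_cases j <;> simp [P2] <;> norm_num
  · intro i; fin_cases i <;> simp [Fin.sum_univ_four, P2] <;> norm_num
  · intro i j; exact ⟨2, by norm_num, P2_sq_pos i j⟩
  · exact ⟨1, by norm_num [P2]⟩
  · refine ⟨![1/77, 6/77, 6/77, 64/77], ⟨?_, ?_, ?_⟩, fun π h => pi_unique π h⟩
    · intro i; fin_cases i <;> norm_num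
    · simp [Fin.sum_univ_four]; norm_num
    · intro j; fin_cases j <;>
        simp [Fin.sum_univ_four, P2] <;> norm_num
  · intro π h
    have := pi_unique π h
    rw [this]; norm_num
end
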